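/- There exists a constant C > 0 with the following property. Let G be a group acting by isometries on a 1-hyperbolic geodesic metric space (X,d) with base point x ∈ X, and let g ∈ G. Then either ‖g‖ ≤ C, or g has infinite order, the cyclic subgroup ⟨g⟩ is free with free basis (g), and the map ℤ → X, k ↦ g^k x, is a quasi-isometric embedding. -/

import Mathlib

set_option linter.unusedVariables false

/-- A geodesic segment from `a` to `b`: the image of an isometric
parameterization of the interval `[0, dist a b]`. -/
def IsGeodesicSegment {X : Type*} [MetricSpace X] (s : Set X) (a b : X) : Prop :=
  ∃ f : ℝ → X, f 0 = a ∧ f (dist a b) = b ∧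
    (∀ t₁ ∈ Set.Icc (0 : ℝ) (dist a b), ∀ t₂ ∈ Set.Icc (0 : ℝ) (dist a b),
      dist (f t₁) (f t₂) = |t₁ - t₂|) ∧
    s = f '' Set.Icc (0 : ℝ) (dist a b)

/-- A geodesic metric space: any two points are joined by a geodesic segment. -/
def GeodesicSpace (X : Type*) [MetricSpace X] : Prop :=
  ∀ a b : X, ∃ s : Set X, IsGeodesicSegment s a b

/-- `A` is contained in the `r`-neighborhood of `B`. -/
def InNbhd {X : Type*} [MetricSpace X] (A B : Set X) (r : ℝ) : Prop :=
  ∀ p ∈ A, ∃ q ∈ B, dist p q ≤ r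

/-- `δ`-hyperbolicity: every geodesic triangle is `δ`-thin, i.e. each side is
contained in the `δ`-neighborhood of the union of the other two sides. -/
def DeltaHyperbolic (X : Type*) [MetricSpace X] (δ : ℝ) : Prop :=
  ∀ a b c : X, ∀ sab sac sbc : Set X,
    IsGeodesicSegment sab a b → IsGeodesicSegment sac a c → IsGeodesicSegment sbc b c →
    InNbhd sab (sac ∪ sbc) δ

/-- Elementary Nielsen moves on an `n`-tuple of elements of a group. -/
inductive NielsenMove {G : Type*} [Group G] {n : ℕ} : (Fin n → G) → (Fin n → G) → Prop
  | inv (g : Fin n → G) (i : Fin n) : NielsenMove g (Function.update g i (g i)⁻¹)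
  | mul (g : Fin n → G) (i j : Fin n) (hij : i ≠ j) :
      NielsenMove g (Function.update g i (g i * g j))
  | swap (g : Fin n → G) (i j : Fin n) (hij : i ≠ j) :
      NielsenMove g (g ∘ Equiv.swap i j)

/-- Nielsen equivalence: a finite chain of elementary Nielsen moves. -/
def NielsenEquiv {G : Type*} [Group G] {n : ℕ} (M M' : Fin n → G) : Prop :=
  Relation.ReflTransGen NielsenMove M M'

/-- The word metric on the free group `F(x_1, …, x_n)`:
the length of the reduced word representing `w⁻¹ * v`. -/
noncomputable def freeDist {n : ℕ} (w v : FreeGroup (Fin n)) : ℝ :=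
  ((w⁻¹ * v).toWord.length : ℝ)

/-- The orbit map (on the subgroup generated by the tuple `g`, identified with
a quotient of the free group via `FreeGroup.lift g`) is a quasi-isometric embedding
with respect to the word metric of the basis `g`. -/
def OrbitQIEmbed {G X : Type*} [Group G] [MetricSpace X] [MulAction G X]
    {n : ℕ} (x : X) (g : Fin n → G) : Prop :=
  ∃ lam eps : ℝ, 1 ≤ lam ∧ 0 ≤ eps ∧ ∀ w v : FreeGroup (Fin n),
    lam⁻¹ * freeDist w v - eps ≤ dist ((FreeGroup.lift g w) • x) ((FreeGroup.lift g v) • x) ∧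
    dist ((FreeGroup.lift g w) • x) ((FreeGroup.lift g v) • x) ≤ lam * freeDist w v + eps

/-- The sum of the displacements `|g_i|_x` of the members of a tuple. -/
noncomputable def tupleLen {G X : Type*} [Group G] [MetricSpace X] [MulAction G X]
    {n : ℕ} (x : X) (M : Fin n → G) : ℝ :=
  ∑ i, dist x (M i • x)

/-- A minimal tuple: `|M|_x ≤ |M'|_x + 1` for every Nielsen-equivalent tuple `M'`. -/
def MinimalTuple {G X : Type*} [Group G] [MetricSpace X] [MulAction G X]
    {n : ℕ} (x : X) (M : Fin n → G) : Prop :=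
  ∀ M' : Fin n → G, NielsenEquiv M M' → tupleLen x M ≤ tupleLen x M' + 1

/-- A freely reduced word in letters `(i, ±1)`: no letter is followed by its inverse. -/
def ReducedWord {n : ℕ} (l : List (Fin n × Bool)) : Prop :=
  l.Chain' fun a b => a.1 = b.1 → a.2 = b.2

/-- The element of `G` represented by a word in the tuple `g` and its inverses. -/
def wordProd {G : Type*} [Group G] {n : ℕ} (g : Fin n → G) (l : List (Fin n × Bool)) : G :=
  (l.map fun p => if p.2 then g p.1 else (g p.1)⁻¹).prod

/-- Conclusion (2): for freely reduced `u = g_{i_1}^{ε_1} ⋯ g_{i_k}^{ε_k}`, any geodesic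
`[x, ux]` lies in the `d`-neighborhood of the broken path
`[x, g_{i_1}^{ε_1} x] ∪ ⋯ ∪ g_{i_1}^{ε_1} ⋯ g_{i_{k-1}}^{ε_{k-1}} [x, g_{i_k}^{ε_k} x]`. -/
def BrokenPathNbhd {G X : Type*} [Group G] [MetricSpace X] [MulAction G X]
    {n : ℕ} (x : X) (g : Fin n → G) (d : ℝ) : Prop :=
  ∀ l : List (Fin n × Bool), l ≠ [] → ReducedWord l →
    ∀ S : Set X, IsGeodesicSegment S x (wordProd g l • x) →
    ∀ seg : ℕ → Set X,
      (∀ j < l.length, IsGeodesicSegment (seg j)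
        (wordProd g (l.take j) • x) (wordProd g (l.take (j + 1)) • x)) →
      ∀ p ∈ S, ∃ j < l.length, ∃ q ∈ seg j, dist p q ≤ d

/-- For freely reduced `u`, any geodesic `[x, ux]` lies in the
`max_i (|g_i|_x/2 + d)`-neighborhood of the orbit `Ux`. -/
def SegInOrbitNbhd {G X : Type*} [Group G] [MetricSpace X] [MulAction G X]
    {n : ℕ} (x : X) (g : Fin n → G) (d : ℝ) : Prop :=
  ∀ l : List (Fin n × Bool), l ≠ [] → ReducedWord l →
    ∀ S : Set X, IsGeodesicSegment S x (wordProd g l • x) →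
    ∀ p ∈ S, ∃ (w : FreeGroup (Fin n)) (i : Fin n),
      dist p ((FreeGroup.lift g w) • x) ≤ dist x (g i • x) / 2 + d

/-- Conclusion (3): for freely reduced `u = g_{i_1}^{ε_1} ⋯ g_{i_k}^{ε_k}` one has
`|u|_x ≥ |g_{i_j}|_x - d` for every letter occurring in `u`. -/
def LetterBound {G X : Type*} [Group G] [MetricSpace X] [MulAction G X]
    {n : ℕ} (x : X) (g : Fin n → G) (d : ℝ) : Prop :=
  ∀ l : List (Fin n × Bool), ReducedWord l → ∀ j : Fin l.length,
    dist x (g (l.get j).1 • x) - d ≤ dist x (wordProd g l • x)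

/-- Conclusion (4): every subsegment of a geodesic `[x, ux]`, `u ∈ U`, of length
greater than `d₄` meets the `max_i (|g_i|_x/2 - c)`-neighborhood of the orbit `Ux`. -/
def SubsegMeetsOrbit {G X : Type*} [Group G] [MetricSpace X] [MulAction G X]
    {n : ℕ} (x : X) (g : Fin n → G) (d₄ c : ℝ) : Prop :=
  ∀ w : FreeGroup (Fin n), ∀ S : Set X, IsGeodesicSegment S x ((FreeGroup.lift g w) • x) →
    ∀ a ∈ S, ∀ b ∈ S, ∀ τ : Set X, IsGeodesicSegment τ a b → τ ⊆ S → d₄ < dist a b →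
    ∃ p ∈ τ, ∃ (v : FreeGroup (Fin n)) (i : Fin n),
      dist p ((FreeGroup.lift g v) • x) ≤ dist x (g i • x) / 2 - c

/-- The dichotomy of Theorem 11 for an `(m+1)`-tuple `f` at base point `x`, with
constants `d₁, d₂, d₃, d₄` and parameter `c`. -/
def Thm11Alt {G X : Type*} [Group G] [MetricSpace X] [MulAction G X]
    {m : ℕ} (x : X) (f : Fin (m + 1) → G) (d₁ d₂ d₃ d₄ c : ℝ) : Prop :=
  (∃ f' : Fin (m + 1) → G, NielsenEquiv f f' ∧ (⨅ y : X, dist y (f' 0 • y)) ≤ d₁) ∨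
  (Function.Injective ⇑(FreeGroup.lift f) ∧ OrbitQIEmbed x f ∧ BrokenPathNbhd x f d₂ ∧
    SegInOrbitNbhd x f d₂ ∧ LetterBound x f d₃ ∧ SubsegMeetsOrbit x f d₄ c)

/-- A naturally parameterized `(λ, ε)`-quasigeodesic on the set `I ⊆ ℝ`. -/
def IsQuasigeodesicOn {X : Type*} [MetricSpace X] (α : ℝ → X) (I : Set ℝ)
    (lam eps : ℝ) : Prop :=
  (∀ s ∈ I, ∀ t ∈ I, dist (α s) (α t) ≤ |s - t|) ∧
  (∀ s ∈ I, ∀ t ∈ I, |s - t| ≤ lam * dist (α s) (α t) + eps)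

/-- A naturally parameterized `T`-local `(λ, ε)`-quasigeodesic on the set `I ⊆ ℝ`. -/
def IsLocalQuasigeodesicOn {X : Type*} [MetricSpace X] (α : ℝ → X) (I : Set ℝ)
    (T lam eps : ℝ) : Prop :=
  (∀ s ∈ I, ∀ t ∈ I, dist (α s) (α t) ≤ |s - t|) ∧
  (∀ s ∈ I, ∀ t ∈ I, |s - t| ≤ T → |s - t| ≤ lam * dist (α s) (α t) + eps)

/-- The data provided by Lemma 15 for the pair `(g, h)`: a point `r` together with
geodesic segments `[x,r]`, `[r,gx]`, `[r,ghx]` such that the broken paths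
`w_g = [x,r] ∪ [r,gx]`, `w_h = [gx,r] ∪ [r,ghx]`, `w_{gh} = [x,r] ∪ [r,ghx]` have
lengths at most `|g|_x + 2`, `|h|_x + 2`, `|gh|_x + 2` respectively and each lies in
the `2`-neighborhood of any geodesic segment joining its endpoints. -/
def Lemma15Data {G X : Type*} [Group G] [MetricSpace X] [MulAction G X]
    (x : X) (g h : G) (r : X) (sxr srg srgh : Set X) : Prop :=
  IsGeodesicSegment sxr x r ∧ IsGeodesicSegment srg r (g • x) ∧
  IsGeodesicSegment srgh r ((g * h) • x) ∧
  dist x r + dist r (g • x) ≤ dist x (g • x) + 2 ∧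
  dist (g • x) r + dist r ((g * h) • x) ≤ dist x (h • x) + 2 ∧
  dist x r + dist r ((g * h) • x) ≤ dist x ((g * h) • x) + 2 ∧
  (∀ S : Set X, IsGeodesicSegment S x (g • x) → InNbhd (sxr ∪ srg) S 2) ∧
  (∀ S : Set X, IsGeodesicSegment S (g • x) ((g * h) • x) → InNbhd (srg ∪ srgh) S 2) ∧
  (∀ S : Set X, IsGeodesicSegment S x ((g * h) • x) → InNbhd (sxr ∪ srgh) S 2)

/-- Conclusion (4) of Proposition 13, for products
`w = h₁ gₙ^{ε₁} h₂ gₙ^{ε₂} ⋯ hₗ gₙ^{εₗ} h_{l+1}` with `hᵢ ∈ H`. -/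
def Prop13Four {G X : Type*} [Group G] [MetricSpace X] [MulAction G X]
    (x : X) (H : Subgroup G) (gn : G) (T L : ℝ) : Prop :=
  ∀ l : ℕ, 1 ≤ l → ∀ (h : ℕ → G) (e : ℕ → ℤ),
    (∀ i ≤ l, h i ∈ H) →
    (∀ i < l, e i = 1 ∨ e i = -1) →
    (∀ i, 1 ≤ i → i < l → e (i - 1) = -(e i) → h i ≠ 1) →
    ∀ A : ℕ → G, A 0 = 1 → (∀ i < l, A (i + 1) = A i * h i * gn ^ (e i)) →
    ∀ S : Set X, IsGeodesicSegment S x ((A l * h l) • x) →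
    ∀ a ∈ S, ∀ b ∈ S, ∀ I : Set X, IsGeodesicSegment I a b → I ⊆ S → 10 * T ≤ dist a b →
    ∃ u v : G,
      ((∃ j < l, u = A j * h j ∧ v = A j * h j * gn ^ (e j)) ∨
        (∃ j ≤ l, u = A j ∧ v = A j * h j)) ∧
      ∃ Seg : Set X, IsGeodesicSegment Seg (u • x) (v • x) ∧
        ∃ a' ∈ Seg, ∃ b' ∈ Seg, ∃ τ : Set X, IsGeodesicSegment τ a' b' ∧ τ ⊆ Seg ∧
          T ≤ dist a' b' ∧ InNbhd τ I (2 * L + 100)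

/-! If `g` moves every point by more than `11`, thinness of the triangle `y, g y, g² y` forces
`d(x, g² x) ≥ d(x, g x) + 7`, i.e. the orbit turns by a small Gromov product
`(gⁿ x | gⁿ⁺² x)_{gⁿ⁺¹ x} ≤ (d(x, g x) - 7)/2` at each step. The four-point condition
`(a|b)_w ≥ min ((a|c)_w, (c|b)_w) - 3δ` propagates this along the orbit, giving
`d(x, gⁿ x) ≥ n`. With `d(x, gⁿ x) ≤ n d(x, g x)` this makes `k ↦ gᵏ x` a quasi-isometric
embedding, and in particular `g` has infinite order. -/

open Set Function

namespace IsGeodesicSegment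

variable {X : Type*} [MetricSpace X] {s : Set X} {a b p q : X}

theorem exists_mem_dist_eq (hs : IsGeodesicSegment s a b) {t : ℝ} (ht : t ∈ Icc 0 (dist a b)) :
    ∃ p ∈ s, dist a p = t := by
  obtain ⟨f, hf0, -, hfi, rfl⟩ := hs
  refine ⟨f t, mem_image_of_mem f ht, ?_⟩
  rw [← hf0, hfi 0 (left_mem_Icc.2 dist_nonneg) t ht, zero_sub, abs_neg, abs_of_nonneg ht.1]

theorem dist_eq_abs_sub (hs : IsGeodesicSegment s a b) (hp : p ∈ s) (hq : q ∈ s) :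
    dist p q = |dist a p - dist a q| := by
  obtain ⟨f, hf0, -, hfi, rfl⟩ := hs
  obtain ⟨t₁, ht₁, rfl⟩ := hp
  obtain ⟨t₂, ht₂, rfl⟩ := hq
  have h0 := left_mem_Icc.2 (dist_nonneg (x := a) (y := b))
  rw [← hf0, hfi 0 h0 t₁ ht₁, hfi 0 h0 t₂ ht₂, hfi t₁ ht₁ t₂ ht₂, zero_sub, zero_sub, abs_neg,
    abs_neg, abs_of_nonneg ht₁.1, abs_of_nonneg ht₂.1]

theorem right_mem (hs : IsGeodesicSegment s a b) : b ∈ s := by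
  obtain ⟨f, -, hfd, -, rfl⟩ := hs
  exact ⟨dist a b, right_mem_Icc.2 dist_nonneg, hfd⟩

theorem dist_add_dist (hs : IsGeodesicSegment s a b) (hp : p ∈ s) :
    dist a p + dist p b = dist a b := by
  obtain ⟨f, hf0, hfd, hfi, rfl⟩ := hs
  obtain ⟨t, ht, rfl⟩ := hp
  have hap := hfi 0 (left_mem_Icc.2 dist_nonneg) t ht
  have hpb := hfi t ht _ (right_mem_Icc.2 dist_nonneg)
  rw [hf0] at hap
  rw [hfd] at hpb
  rw [hap, hpb, abs_of_nonpos (by linarith [ht.1]), abs_of_nonpos (by linarith [ht.2])]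
  ring

theorem image_isometry {Y : Type*} [MetricSpace Y] {φ : X → Y} (hφ : Isometry φ)
    (hs : IsGeodesicSegment s a b) : IsGeodesicSegment (φ '' s) (φ a) (φ b) := by
  obtain ⟨f, hf0, hfd, hfi, rfl⟩ := hs
  refine ⟨φ ∘ f, ?_, ?_, ?_, ?_⟩ <;> simp only [hφ.dist_eq, comp_apply, hf0, hfd]
  · exact hfi
  · exact (image_comp φ f _).symm

end IsGeodesicSegment

section GromovProduct

variable {X : Type*} [MetricSpace X]

/-- The Gromov product `(a|b)_w`. -/
noncomputable def gromovProduct (w a b : X) : ℝ :=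
  (dist w a + dist w b - dist a b) / 2

theorem gromovProduct_comm (w a b : X) : gromovProduct w a b = gromovProduct w b a := by
  simp only [gromovProduct, add_comm (dist w a), dist_comm a b]

theorem gromovProduct_nonneg (w a b : X) : 0 ≤ gromovProduct w a b := by
  unfold gromovProduct
  linarith [dist_triangle_left a b w]

theorem gromovProduct_le_dist_of_mem {s : Set X} {a b : X} (hs : IsGeodesicSegment s a b)
    (w : X) {q : X} (hq : q ∈ s) : gromovProduct w a b ≤ dist w q := by
  unfold gromovProduct
  linarith [hs.dist_add_dist hq, dist_triangle_right w a q, dist_triangle w q b]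

theorem gromovProduct_smul {G : Type*} [SMul G X] [IsIsometricSMul G X] (g : G) (w a b : X) :
    gromovProduct (g • w) (g • a) (g • b) = gromovProduct w a b := by
  simp only [gromovProduct, dist_smul]

end GromovProduct

namespace DeltaHyperbolic

variable {X : Type*} [MetricSpace X] {δ : ℝ}

theorem nonneg (hyp : DeltaHyperbolic X δ) (geo : GeodesicSpace X) (x : X) : 0 ≤ δ := by
  obtain ⟨s, hs⟩ := geo x x
  obtain ⟨q, -, hq⟩ := hyp x x x s s s hs hs hs x hs.right_mem
  exact dist_nonneg.trans hq

/-- The point at distance `(b|w)_a` from `a` on `[a, b]` is `δ`-close to `[a, w]` or `[b, w]`,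
and at both places it sits at distance about `(a|b)_w` from `w`. -/
theorem exists_mem_dist_le_gromovProduct_add (hyp : DeltaHyperbolic X δ) (geo : GeodesicSpace X)
    {s : Set X} {a b : X} (hs : IsGeodesicSegment s a b) (w : X) :
    ∃ p ∈ s, dist w p ≤ gromovProduct w a b + 2 * δ := by
  have ht : gromovProduct a b w ∈ Icc 0 (dist a b) :=
    ⟨gromovProduct_nonneg a b w, by unfold gromovProduct; linarith [dist_triangle a b w]⟩
  obtain ⟨p, hp, hap⟩ := hs.exists_mem_dist_eq ht
  obtain ⟨saw, hsaw⟩ := geo a w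
  obtain ⟨sbw, hsbw⟩ := geo b w
  obtain ⟨q, hq, hpq⟩ := hyp a b w s saw sbw hs hsaw hsbw p hp
  refine ⟨p, hp, ?_⟩
  have hpb := hs.dist_add_dist hp
  unfold gromovProduct at hap ⊢
  rcases hq with hq | hq
  · linarith [hsaw.dist_add_dist hq, dist_triangle a q p, dist_triangle w q p, dist_comm p q,
      dist_comm w q, dist_comm w a, dist_comm w b]
  · linarith [hsbw.dist_add_dist hq, dist_triangle b q p, dist_triangle w q p, dist_comm p q,
      dist_comm w q, dist_comm w a, dist_comm w b, dist_comm p b]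

theorem min_gromovProduct_le_add (hyp : DeltaHyperbolic X δ) (geo : GeodesicSpace X)
    (w a b c : X) :
    min (gromovProduct w a c) (gromovProduct w c b) ≤ gromovProduct w a b + 3 * δ := by
  obtain ⟨sab, hsab⟩ := geo a b
  obtain ⟨sac, hsac⟩ := geo a c
  obtain ⟨sbc, hsbc⟩ := geo b c
  obtain ⟨p, hp, hwp⟩ := hyp.exists_mem_dist_le_gromovProduct_add geo hsab w
  obtain ⟨q, hq, hpq⟩ := hyp a b c sab sac sbc hsab hsac hsbc p hp
  have hwq : dist w q ≤ gromovProduct w a b + 3 * δ := by linarith [dist_triangle w p q]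
  rcases hq with hq | hq
  · exact (min_le_left _ _).trans ((gromovProduct_le_dist_of_mem hsac w hq).trans hwq)
  · rw [min_comm, gromovProduct_comm]
    exact (min_le_left _ _).trans ((gromovProduct_le_dist_of_mem hsbc w hq).trans hwq)

/-- Apply thinness to the triangle `y, φ y, φ² y` at the point `p ∈ [y, φ y]` with
`d(p, φ y) = d(y, φ y)/2 - s`: if `p` is close to `[y, φ² y]` then `d(y, φ² y)` is large; if it is
close to `φ [y, φ y]`, then the point `v ∈ [y, φ y]` with `d(y, v) = d(p, φ y)` is moved little. -/
theorem exists_dist_le_or_le_dist_comp (hyp : DeltaHyperbolic X δ) (geo : GeodesicSpace X)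
    {φ : X → X} (hφ : Isometry φ) (y : X) {s : ℝ} (hs₀ : 0 ≤ s) (hs : 2 * s ≤ dist y (φ y)) :
    (∃ v, dist v (φ v) ≤ 2 * s + 2 * δ) ∨ dist y (φ y) + 2 * s - 2 * δ ≤ dist y (φ (φ y)) := by
  set L := dist y (φ y)
  obtain ⟨σ, hσ⟩ := geo y (φ y)
  obtain ⟨τ, hτ⟩ := geo y (φ (φ y))
  have hφσ : IsGeodesicSegment (φ '' σ) (φ y) (φ (φ y)) := hσ.image_isometry hφ
  obtain ⟨p, hp, hdyp⟩ := hσ.exists_mem_dist_eq (t := L / 2 + s) ⟨by linarith, by linarith⟩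
  have hpφ : dist p (φ y) = L / 2 - s := by linarith [hσ.dist_add_dist hp]
  obtain ⟨q, hq, hpq⟩ := hyp y (φ y) (φ (φ y)) σ τ _ hσ hτ hφσ p hp
  rcases hq with hq | ⟨q, hq, rfl⟩
  · right
    have hφL : dist (φ y) (φ (φ y)) = L := hφ.dist_eq y (φ y)
    linarith [hτ.dist_add_dist hq, dist_triangle y q p, dist_triangle (φ y) p q,
      dist_triangle (φ y) q (φ (φ y)), dist_comm p q, dist_comm q p, dist_comm (φ y) p]
  · left
    obtain ⟨v, hv, hyv⟩ := hσ.exists_mem_dist_eq (t := L / 2 - s) ⟨by linarith, by linarith⟩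
    refine ⟨v, ?_⟩
    have hvp : dist v p = 2 * s := by
      rw [hσ.dist_eq_abs_sub hv hp, hyv, hdyp, abs_of_nonpos (by linarith)]
      ring
    have hqv : dist (φ q) (φ v) ≤ δ := by
      rw [hφ.dist_eq, hσ.dist_eq_abs_sub hq hv, hyv, ← hφ.dist_eq y q, abs_le]
      constructor <;> linarith [dist_triangle (φ y) p (φ q), dist_triangle (φ y) (φ q) p,
        dist_comm (φ y) p, dist_comm p (φ q)]
    linarith [dist_triangle4 v p (φ q) (φ v)]

/-- The four-point condition at `z (n + 1)` propagates the bound on `(z 0 | z (n + 1))_{z n}`,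
because `(z n | z 0)_{z (n + 1)} + (z 0 | z (n + 1))_{z n} = L` is too large. -/
theorem gromovProduct_le_and_add_mul_le_dist (hyp : DeltaHyperbolic X δ) (geo : GeodesicSpace X)
    {z : ℕ → X} {L c : ℝ} (hstep : ∀ n, dist (z n) (z (n + 1)) = L)
    (hturn : ∀ n, gromovProduct (z (n + 1)) (z n) (z (n + 2)) ≤ c) (hL : 2 * (c + 3 * δ) < L)
    (n : ℕ) :
    gromovProduct (z n) (z 0) (z (n + 1)) ≤ c + 3 * δ ∧
      L + n * (L - 2 * (c + 3 * δ)) ≤ dist (z 0) (z (n + 1)) := by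
  induction n with
  | zero =>
    have hc : 0 ≤ c := (gromovProduct_nonneg _ _ _).trans (hturn 0)
    have hδ := hyp.nonneg geo (z 0)
    simp only [gromovProduct, dist_self, zero_add, sub_self, zero_div, Nat.cast_zero, zero_mul,
      add_zero, hstep 0]
    exact ⟨by linarith, le_rfl⟩
  | succ n ih =>
    have hfour := hyp.min_gromovProduct_le_add geo (z (n + 1)) (z n) (z (n + 2)) (z 0)
    have hback : c + 3 * δ < gromovProduct (z (n + 1)) (z n) (z 0) := by
      have := ih.1
      unfold gromovProduct at this ⊢
      linarith [hstep n, dist_comm (z (n + 1)) (z n), dist_comm (z 0) (z n),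
        dist_comm (z 0) (z (n + 1))]
    have hnext : gromovProduct (z (n + 1)) (z 0) (z (n + 2)) ≤ c + 3 * δ := by
      by_contra! h
      linarith [lt_min hback h, hturn n]
    refine ⟨hnext, ?_⟩
    have := ih.2
    unfold gromovProduct at hnext
    push_cast
    linarith [hstep (n + 1), dist_comm (z (n + 1)) (z 0)]

theorem mul_le_dist_of_gromovProduct_le (hyp : DeltaHyperbolic X δ) (geo : GeodesicSpace X)
    {z : ℕ → X} {L c : ℝ} (hstep : ∀ n, dist (z n) (z (n + 1)) = L)
    (hturn : ∀ n, gromovProduct (z (n + 1)) (z n) (z (n + 2)) ≤ c) (hL : 2 * (c + 3 * δ) < L)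
    (n : ℕ) :
    n * (L - 2 * (c + 3 * δ)) ≤ dist (z 0) (z n) := by
  cases n with
  | zero => simp
  | succ n =>
    have hc : 0 ≤ c := (gromovProduct_nonneg _ _ _).trans (hturn 0)
    have hδ := hyp.nonneg geo (z 0)
    push_cast
    linarith [(gromovProduct_le_and_add_mul_le_dist hyp geo hstep hturn hL n).2]

end DeltaHyperbolic

section Orbit

variable {G X : Type*} [MetricSpace X]

theorem not_isOfFinOrder_of_mul_le_dist_pow_smul [Monoid G] [MulAction G X] {g : G} {x : X}
    {ε : ℝ} (hε : 0 < ε) (h : ∀ n : ℕ, n * ε ≤ dist x (g ^ n • x)) : ¬IsOfFinOrder g := by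
  rintro hfin
  obtain ⟨n, hn, hgn⟩ := isOfFinOrder_iff_pow_eq_one.1 hfin
  have := h n
  rw [hgn, one_smul, dist_self] at this
  have : (1 : ℝ) ≤ n := by exact_mod_cast hn
  nlinarith

theorem dist_pow_smul_le [Monoid G] [MulAction G X] [IsIsometricSMul G X] (g : G) (x : X)
    (n : ℕ) : dist x (g ^ n • x) ≤ n * dist x (g • x) := by
  induction n with
  | zero => simp
  | succ n ih =>
    calc dist x (g ^ (n + 1) • x) ≤ dist x (g ^ n • x) + dist (g ^ n • x) (g ^ (n + 1) • x) :=
          dist_triangle _ _ _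
      _ = dist x (g ^ n • x) + dist x (g • x) := by rw [pow_succ, mul_smul, dist_smul]
      _ ≤ (n + 1 : ℕ) * dist x (g • x) := by push_cast; linarith

variable [Group G] [MulAction G X] [IsIsometricSMul G X]

theorem dist_zpow_smul_zpow_smul (g : G) (x : X) (k l : ℤ) :
    dist (g ^ k • x) (g ^ l • x) = dist x (g ^ (l - k).natAbs • x) := by
  rw [show l = k + (l - k) by ring, zpow_add, mul_smul, dist_smul, add_sub_cancel_left]
  rcases Int.natAbs_eq (l - k) with h | h <;> rw [h]
  · rw [zpow_natCast, Int.natAbs_natCast]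
  · rw [zpow_neg, zpow_natCast, Int.natAbs_neg, Int.natAbs_natCast, ← dist_smul (g ^ _),
      smul_inv_smul, dist_comm]

theorem DeltaHyperbolic.mul_le_dist_pow_smul {δ : ℝ} (hyp : DeltaHyperbolic X δ)
    (geo : GeodesicSpace X) (g : G) (x : X) (h : dist x (g • x) + 6 * δ < dist x (g ^ 2 • x))
    (n : ℕ) : n * (dist x (g ^ 2 • x) - dist x (g • x) - 6 * δ) ≤ dist x (g ^ n • x) := by
  have hstep (n : ℕ) : dist (g ^ n • x) (g ^ (n + 1) • x) = dist x (g • x) := by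
    rw [pow_succ, mul_smul, dist_smul]
  have hturn (n : ℕ) : gromovProduct (g ^ (n + 1) • x) (g ^ n • x) (g ^ (n + 2) • x) =
      gromovProduct (g • x) x (g ^ 2 • x) := by
    rw [pow_add, pow_add, mul_smul, mul_smul, pow_one, gromovProduct_smul]
  have hturn_eq : gromovProduct (g • x) x (g ^ 2 • x) =
      (2 * dist x (g • x) - dist x (g ^ 2 • x)) / 2 := by
    rw [gromovProduct, dist_comm, pow_two, mul_smul, dist_smul]
    ring
  have := hyp.mul_le_dist_of_gromovProduct_le geo (z := fun n => g ^ n • x) hstep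
    (fun n => (hturn n).le) (by rw [hturn_eq]; linarith) n
  simp only [pow_zero, one_smul, hturn_eq] at this
  linarith

theorem exists_quasiIsometric_zpow_smul_of_mul_le_dist_pow_smul {g : G} {x : X} {ε : ℝ}
    (hε : 0 < ε) (h : ∀ n : ℕ, n * ε ≤ dist x (g ^ n • x)) :
    ∃ lam eps : ℝ, 1 ≤ lam ∧ 0 ≤ eps ∧ ∀ k l : ℤ,
      lam⁻¹ * |(k : ℝ) - (l : ℝ)| - eps ≤ dist ((g ^ k) • x) ((g ^ l) • x) ∧
      dist ((g ^ k) • x) ((g ^ l) • x) ≤ lam * |(k : ℝ) - (l : ℝ)| + eps := by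
  set lam := max (max 1 ε⁻¹) (dist x (g • x))
  have hlam : lam⁻¹ ≤ ε := inv_le_of_inv_le₀ hε (le_max_of_le_left (le_max_right _ _))
  refine ⟨lam, 0, le_max_of_le_left (le_max_left _ _), le_rfl, fun k l => ?_⟩
  have habs : |(k : ℝ) - (l : ℝ)| = (l - k).natAbs := by
    rw [Nat.cast_natAbs, Int.cast_abs, Int.cast_sub, abs_sub_comm]
  rw [dist_zpow_smul_zpow_smul, habs, sub_zero, add_zero]
  constructor
  · exact (mul_le_mul_of_nonneg_right hlam (Nat.cast_nonneg _)).trans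
      ((mul_comm _ _).le.trans (h _))
  · exact (dist_pow_smul_le g x _).trans
      (by rw [mul_comm]; exact mul_le_mul_of_nonneg_right (le_max_right _ _) (Nat.cast_nonneg _))

end Orbit

theorem FreeGroup.lift_const_injective {G : Type*} [Group G] {g : G} (hg : ¬IsOfFinOrder g) :
    Injective (FreeGroup.lift fun _ : Unit => g) := by
  have hlift : ⇑(FreeGroup.lift fun _ : Unit => g) =
      (fun n : ℤ => g ^ n) ∘ freeGroupUnitEquivInt := by
    funext w
    conv_lhs => rw [← freeGroupUnitEquivInt.symm_apply_apply w]
    simp [freeGroupUnitEquivInt]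
  rw [hlift]
  exact (injective_zpow_iff_not_isOfFinOrder.2 hg).comp freeGroupUnitEquivInt.injective

/-- There is a constant `C > 0` such that for any isometric action of a group `G` on a
`1`-hyperbolic geodesic space `X` with base point `x` and any `g ∈ G`, either
`‖g‖ ≤ C`, or `g` has infinite order, the cyclic subgroup `⟨g⟩` is free with free
basis `(g)`, and the map `ℤ → X`, `k ↦ g^k • x`, is a quasi-isometric embedding. -/
theorem cyclic_short_or_quasiisometric :
    ∃ C : ℝ, 0 < C ∧
      ∀ (G : Type*) [Group G] (X : Type*) [MetricSpace X] [MulAction G X],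
        GeodesicSpace X → DeltaHyperbolic X 1 →
        (∀ (g : G) (a b : X), dist (g • a) (g • b) = dist a b) →
        ∀ (x : X) (g : G),
          (⨅ y : X, dist y (g • y)) ≤ C ∨
          (¬ IsOfFinOrder g ∧
            Function.Injective ⇑(FreeGroup.lift (fun _ : Unit => g)) ∧
            ∃ lam eps : ℝ, 1 ≤ lam ∧ 0 ≤ eps ∧ ∀ k l : ℤ,
              lam⁻¹ * |(k : ℝ) - (l : ℝ)| - eps ≤ dist ((g ^ k) • x) ((g ^ l) • x) ∧
              dist ((g ^ k) • x) ((g ^ l) • x) ≤ lam * |(k : ℝ) - (l : ℝ)| + eps) := by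
  refine ⟨11, by norm_num, fun G _ X _ _ geo hyp hiso x g => or_iff_not_imp_left.2 fun hC => ?_⟩
  have : IsIsometricSMul G X := ⟨fun g => .of_dist_eq (hiso g)⟩
  have hmoved (y : X) : 11 < dist y (g • y) :=
    (not_le.1 hC).trans_le (ciInf_le ⟨0, forall_mem_range.2 fun _ => dist_nonneg⟩ y)
  have hsq : dist x (g • x) + 7 ≤ dist x (g ^ 2 • x) := by
    rw [pow_two, mul_smul]
    have := hyp.exists_dist_le_or_le_dist_comp geo (isometry_smul X g) x (s := 9 / 2)
      (by norm_num) (by linarith [hmoved x])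
    norm_num at this
    linarith [this.resolve_left fun ⟨v, hv⟩ => (hmoved v).not_ge hv]
  have hlin := hyp.mul_le_dist_pow_smul geo g x (by linarith)
  have hε : 0 < dist x (g ^ 2 • x) - dist x (g • x) - 6 * 1 := by linarith
  have hfin := not_isOfFinOrder_of_mul_le_dist_pow_smul hε hlin
  exact ⟨hfin, FreeGroup.lift_const_injective hfin,
    exists_quasiIsometric_zpow_smul_of_mul_le_dist_pow_smul hε hlin⟩
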